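/- Let U be finite and nonempty, Σ ⊆ 2^U, m ∈ ℕ with m ≥ 1. There exists a set cover Σ' ⊆ Σ of U with |Σ'| ≤ m if and only if there exist DNFs (θ,θ') over variables Σ with R_d(θ)+R_d(θ') ≤ m+1, f_θ(x^u)=1 for all u∈U, f_{θ'}(0^Σ)=1, and f_θ + f_{θ'} ≤ 1 pointwise. -/
import Mathlib


open Classical in
/-- Evaluation of a DNF on an input, as a {0,1}-valued function. -/
noncomputable def dnfEval {V : Type} (θ : Finset (Finset V × Finset V)) (x : V → Bool) : ℕ :=
  if ∃ p ∈ θ, (∀ v ∈ p.1, x v = true) ∧ (∀ v ∈ p.2, x v = false) then 1 else 0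

/-- Length of a DNF: maximum term size. -/
def dnfDepth {V : Type} [DecidableEq V] (θ : Finset (Finset V × Finset V)) : ℕ :=
  θ.sup (fun p => p.1.card + p.2.card)

lemma dnfEval_eq_one {V : Type} (θ : Finset (Finset V × Finset V)) (x : V → Bool) :
    dnfEval θ x = 1 ↔ ∃ p ∈ θ, (∀ v ∈ p.1, x v = true) ∧ (∀ v ∈ p.2, x v = false) := by
  unfold dnfEval
  split <;> rename_i h <;> simp [h]

/-- there is a set cover of size at most m iff there is a feasible
DNF pair for the Haussler data of total depth at most m+1. -/
theorem stmt_12 {U : Type} [Fintype U] [DecidableEq U] [Nonempty U]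
    (Sig : Finset (Finset U)) (m : ℕ) (hm : 1 ≤ m) :
    (∃ Sig' : Finset (Finset U), Sig' ⊆ Sig ∧ (∀ u : U, ∃ σ ∈ Sig', u ∈ σ) ∧
      Sig'.card ≤ m) ↔
    (∃ θ θ' : Finset (Finset (Finset U) × Finset (Finset U)),
      (∀ p ∈ θ, p.1 ⊆ Sig ∧ p.2 ⊆ Sig ∧ Disjoint p.1 p.2) ∧
      (∀ p ∈ θ', p.1 ⊆ Sig ∧ p.2 ⊆ Sig ∧ Disjoint p.1 p.2) ∧
      dnfDepth θ + dnfDepth θ' ≤ m + 1 ∧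
      (∀ u : U, dnfEval θ (fun σ => decide (u ∈ σ)) = 1) ∧
      dnfEval θ' (fun _ => false) = 1 ∧
      (∀ x : Finset U → Bool, dnfEval θ x + dnfEval θ' x ≤ 1)) := by
  constructor
  · rintro ⟨S, hSsub, hcov, hcard⟩
    refine ⟨S.image (fun σ => ({σ}, ∅)), {(∅, S)}, ?_, ?_, ?_, ?_, ?_, ?_⟩
    · intro p hp
      simp only [Finset.mem_image] at hp
      obtain ⟨σ, hσ, rfl⟩ := hp
      exact ⟨by simpa using hSsub hσ, by simp, by simp⟩
    · intro p hp
      simp only [Finset.mem_singleton] at hp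
      subst hp
      exact ⟨by simp, hSsub, by simp⟩
    · have h1 : dnfDepth (S.image (fun σ => (({σ}, ∅) : Finset (Finset U) × Finset (Finset U)))) ≤ 1 := by
        apply Finset.sup_le
        intro p hp
        simp only [Finset.mem_image] at hp
        obtain ⟨σ, hσ, rfl⟩ := hp
        simp
      have h2 : dnfDepth {((∅ : Finset (Finset U)), S)} = S.card := by
        simp [dnfDepth]
      omega
    · intro u
      rw [dnfEval_eq_one]
      obtain ⟨σ, hσS, hσu⟩ := hcov u
      exact ⟨({σ}, ∅), Finset.mem_image_of_mem _ hσS, by simp [hσu], by simp⟩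
    · rw [dnfEval_eq_one]
      exact ⟨(∅, S), by simp, by simp, by simp⟩
    · intro x
      by_cases h1 : dnfEval (S.image (fun σ => (({σ}, ∅) : Finset (Finset U) × Finset (Finset U)))) x = 1
      · have h1c := h1
        rw [dnfEval_eq_one] at h1
        obtain ⟨p, hp, hp1, hp2⟩ := h1
        simp only [Finset.mem_image] at hp
        obtain ⟨σ, hσ, rfl⟩ := hp
        have hx : x σ = true := hp1 σ (by simp)
        have : dnfEval ({((∅ : Finset (Finset U)), S)} : Finset _) x = 0 := by
          unfold dnfEval
          rw [if_neg]
          rintro ⟨p, hp, -, hq⟩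
          simp only [Finset.mem_singleton] at hp
          subst hp
          have := hq σ hσ
          simp_all
        omega
      · have : dnfEval (S.image (fun σ => (({σ}, ∅) : Finset (Finset U) × Finset (Finset U)))) x = 0 := by
          unfold dnfEval at h1 ⊢
          split at h1 <;> simp_all
        rw [this]
        have : dnfEval ({((∅ : Finset (Finset U)), S)} : Finset _) x ≤ 1 := by
          unfold dnfEval; split <;> simp
        omega
  · rintro ⟨θ, θ', hθ, hθ', hdepth, heval, hzero, hsum⟩
    rw [dnfEval_eq_one] at hzero
    obtain ⟨p', hp'θ, hp'1, hp'2⟩ := hzero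
    have hp1empty : p'.1 = ∅ := by
      by_contra h
      obtain ⟨v, hv⟩ := Finset.nonempty_of_ne_empty h
      exact absurd (hp'1 v hv) (by simp)
    refine ⟨p'.2, (hθ' p' hp'θ).2.1, ?_, ?_⟩
    · intro u
      have hu := heval u
      rw [dnfEval_eq_one] at hu
      obtain ⟨p, hpθ, hp1, hp2⟩ := hu
      -- consider input y = indicator of p.1
      set y : Finset U → Bool := fun σ => decide (σ ∈ p.1) with hy
      have hθy : dnfEval θ y = 1 := by
        rw [dnfEval_eq_one]
        refine ⟨p, hpθ, by simp [hy], ?_⟩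
        intro v hv
        have hdisj := (hθ p hpθ).2.2
        simp only [hy, decide_eq_false_iff_not]
        exact fun hvp1 => (Finset.disjoint_left.mp hdisj hvp1) hv
      have hθ'y : dnfEval θ' y = 0 := by
        have := hsum y
        omega
      -- so term p' fails on y: ∃ σ ∈ p'.2, y σ = true
      have : ¬ ((∀ v ∈ p'.1, y v = true) ∧ (∀ v ∈ p'.2, y v = false)) := by
        intro hcon
        have : dnfEval θ' y = 1 := by
          rw [dnfEval_eq_one]; exact ⟨p', hp'θ, hcon⟩
        omega
      rw [hp1empty] at this
      push_neg at this
      obtain ⟨σ, hσ, hσy⟩ := this (by simp)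
      have hσ1 : σ ∈ p.1 := by simpa [hy] using hσy
      have hu : u ∈ σ := by simpa using hp1 σ hσ1
      exact ⟨σ, hσ, hu⟩
    · -- card bound
      have hle : p'.2.card ≤ dnfDepth θ' :=
        le_trans (Nat.le_add_left _ _)
          (Finset.le_sup (f := fun p : Finset (Finset U) × Finset (Finset U) => p.1.card + p.2.card) hp'θ)
      have hθ1 : 1 ≤ dnfDepth θ := by
        by_contra h
        push_neg at h
        have hd : dnfDepth θ = 0 := by omega
        obtain ⟨u⟩ := ‹Nonempty U›
        have hu := heval u
        rw [dnfEval_eq_one] at hu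
        obtain ⟨p, hpθ, -, -⟩ := hu
        have hz : p.1.card + p.2.card = 0 := Nat.le_zero.mp (hd ▸
          Finset.le_sup (f := fun p : Finset (Finset U) × Finset (Finset U) => p.1.card + p.2.card) hpθ)
        have hp1 : p.1 = ∅ := Finset.card_eq_zero.mp (by omega)
        have hp2 : p.2 = ∅ := Finset.card_eq_zero.mp (by omega)
        have hθ0 : dnfEval θ (fun _ => false) = 1 := by
          rw [dnfEval_eq_one]
          exact ⟨p, hpθ, by simp [hp1], by simp [hp2]⟩
        have hθ'0 : dnfEval θ' (fun _ => false) = 1 := by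
          rw [dnfEval_eq_one]; exact ⟨p', hp'θ, hp'1, hp'2⟩
        have := hsum (fun _ => false)
        omega
      omega
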